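/- Let r = e₀(e)₁e₁\1 e₂ and w a string. Suppose w ∈ L(e₀ β e₁ β e₂) for some nonempty β ∈ L(e). Then with α := r(β) the right-extension of β to a right-maximal repeat of w, β is an α-extendable prefix of α, β ∈ L(e), and w ∈ L(e₀ β e₁ β e₂). (Hence checking, for each right-maximal repeat α of w, whether some α-extendable prefix β of α satisfies β ∈ L(e) and w ∈ L(e₀ β e₁ β e₂), is a complete decision procedure for membership in L(r) among matches with nonempty backreferenced substring.) -/

import Mathlib

open Set List

variable {A : Type*}

/-- `β` occurs in `w` at (0-indexed) position `i`, i.e. `w[i..i+|β|-1] = β`. -/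
def OccursAt (w β : List A) (i : ℕ) : Prop := β <+: w.drop i

/-- A repeat of `w`: a nonempty string occurring in `w` at two distinct positions. -/
def IsRepeat (w β : List A) : Prop :=
  β ≠ [] ∧ ∃ i j, i ≠ j ∧ OccursAt w β i ∧ OccursAt w β j

/-- A right-maximal repeat of `w`: a repeat with two occurrences whose right-adjacent
characters differ.  The right-adjacent character of the occurrence at `i` is
`w[i+|β|]?  : Option A`; the value `none` (an occurrence at the right end of `w`)
plays the role of the special character distinct from all alphabet characters. -/
def IsRMRepeat (w β : List A) : Prop :=
  β ≠ [] ∧ ∃ i j, i ≠ j ∧ OccursAt w β i ∧ OccursAt w β j ∧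
    w[i + β.length]? ≠ w[j + β.length]?

/-- `RightExtClosure w β α` says that `α = r(β)`, the right-maximal repeat obtained
from `β` by repeatedly appending the unique common right-adjacent character of all
of its occurrences: equivalently, `α` is a right-maximal repeat of `w` extending `β`
such that no intermediate extension `γ` (with `β ≤ γ < α`) is already right-maximal. -/
def RightExtClosure (w β α : List A) : Prop :=
  IsRMRepeat w α ∧ β <+: α ∧
    ∀ γ, β <+: γ → γ <+: α → γ ≠ α → ¬ IsRMRepeat w γ

namespace OccursAt

variable {w γ : List A} {i : ℕ}

theorem add_length_le (hγ : γ ≠ []) (h : OccursAt w γ i) : i + γ.length ≤ w.length := by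
  have hl := h.length_le
  have hpos := List.length_pos_iff.mpr hγ
  rw [List.length_drop] at hl
  omega

theorem append_singleton {a : A} (h : OccursAt w γ i) (ha : w[i + γ.length]? = some a) :
    OccursAt w (γ ++ [a]) i := by
  rw [OccursAt, List.prefix_iff_eq_take] at h ⊢
  rw [List.length_append, List.length_singleton, List.take_add_one, ← h, List.getElem?_drop, ha]
  rfl

end OccursAt

theorem isRepeat_append {w₀ β w₁ w₂ : List A} (hβ : β ≠ []) :
    IsRepeat (w₀ ++ β ++ w₁ ++ β ++ w₂) β := by
  have hpos := List.length_pos_iff.mpr hβ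
  refine ⟨hβ, w₀.length, (w₀ ++ β ++ w₁).length, by simp only [List.length_append]; omega, ?_, ?_⟩
  · simp [OccursAt, List.drop_left']
  · simp only [OccursAt, List.append_assoc (w₀ ++ β ++ w₁), List.drop_left]
    exact List.prefix_append β w₂

/-- All occurrences of a repeat that is not right-maximal share their right-adjacent
character, so the repeat extends by it. -/
theorem IsRepeat.exists_isRMRepeat {w β : List A} (h : IsRepeat w β) :
    ∃ α, β <+: α ∧ IsRMRepeat w α := by
  by_cases hrm : IsRMRepeat w β
  · exact ⟨β, List.prefix_rfl, hrm⟩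
  obtain ⟨hβ, i, j, hij, hi, hj⟩ := h
  have hsame : w[i + β.length]? = w[j + β.length]? := by
    by_contra hne
    exact hrm ⟨hβ, i, j, hij, hi, hj, hne⟩
  have hi_le := hi.add_length_le hβ
  have hj_le := hj.add_length_le hβ
  obtain ⟨a, ha⟩ : ∃ a, w[i + β.length]? = some a := by
    refine Option.ne_none_iff_exists'.mp fun hnone => ?_
    rw [hnone, eq_comm, List.getElem?_eq_none_iff] at hsame
    rw [List.getElem?_eq_none_iff] at hnone
    omega
  have hext : IsRepeat w (β ++ [a]) :=
    ⟨by simp, i, j, hij, hi.append_singleton ha, hj.append_singleton (hsame ▸ ha)⟩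
  obtain ⟨α, hpre, hα⟩ := hext.exists_isRMRepeat
  exact ⟨α, (List.prefix_append β [a]).trans hpre, hα⟩
termination_by w.length - β.length
decreasing_by
  simp only [List.length_append, List.length_singleton]
  have := List.length_pos_iff.mpr hβ
  omega

/-- `r(β)` is the shortest right-maximal repeat extending `β`. -/
theorem IsRepeat.exists_rightExtClosure {w β : List A} (h : IsRepeat w β) :
    ∃ α, RightExtClosure w β α := by
  obtain ⟨α, hmem, hmin⟩ := (measure List.length).wf.has_min
    {α | β <+: α ∧ IsRMRepeat w α} h.exists_isRMRepeat
  refine ⟨α, hmem.2, hmem.1, fun γ hβγ hγα hne hγ => hmin γ ⟨hβγ, hγ⟩ ?_⟩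
  exact lt_of_le_of_ne hγα.length_le fun hlen => hne (hγα.eq_of_length hlen)

/-- if `w ∈ L(e₀ β e₁ β e₂)` for some nonempty `β ∈ L(e)`, then `β` is a
repeat of `w`, and taking `α := r(β)` (its right-extension to a right-maximal repeat of
`w`), `β` is an `α`-extendable prefix of `α`, `β ∈ L(e)` and `w ∈ L(e₀ β e₁ β e₂)`.
Hence examining, for each right-maximal repeat `α` of `w`, the `α`-extendable prefixes of
`α` is complete for matches with nonempty backreferenced substring. -/
theorem extendable_prefix_complete (e₀ e e₁ e₂ : RegularExpression A) (w β : List A)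
    (hβne : β ≠ []) (hβe : β ∈ e.matches')
    (hmatch : ∃ w₀ w₁ w₂, w₀ ∈ e₀.matches' ∧ w₁ ∈ e₁.matches' ∧ w₂ ∈ e₂.matches' ∧
        w = w₀ ++ β ++ w₁ ++ β ++ w₂) :
    IsRepeat w β ∧
    ∃ α, RightExtClosure w β α ∧ β <+: α ∧ β ∈ e.matches' ∧
      ∃ w₀ w₁ w₂, w₀ ∈ e₀.matches' ∧ w₁ ∈ e₁.matches' ∧ w₂ ∈ e₂.matches' ∧
        w = w₀ ++ β ++ w₁ ++ β ++ w₂ := by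
  obtain ⟨w₀, w₁, w₂, -, -, -, rfl⟩ := id hmatch
  have hrep : IsRepeat (w₀ ++ β ++ w₁ ++ β ++ w₂) β := isRepeat_append hβne
  obtain ⟨α, hα⟩ := hrep.exists_rightExtClosure
  exact ⟨hrep, α, hα, hα.2.1, hβe, hmatch⟩
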